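/- arXiv:1811.11610 — 7 statements merged into one kernel-verified Lean document; each statement's English description precedes it below -/
import Mathlib

section
/- Let L₁, L₂, l, τ > 0. There exists a smooth vector field w : ℝ³ → ℝ³ that is horizontally periodic (with periods 2πL₁ and 2πL₂ in y₁ and y₂), divergence-free on all of ℝ³ (∂₁w₁ + ∂₂w₂ + ∂₃w₃ = 0), vanishes whenever y₃ lies outside some compact subset of the open interval (−l, τ), such that the trace y_h ↦ w₃(y_h, 0) is not identically zero and ∫_Q w₃(y_h, 0)² dy_h = max{L₁², L₂²} · ∫_Q |∇_h w₃(y_h, 0)|² dy_h, where ∇_h := (∂₁, ∂₂). -/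
open MeasureTheory Real Set

/-!
For a wave vector `k ≠ 0` of the lattice dual to the periods, i.e. with `k₁L₁, k₂L₂ ∈ ℤ`, and a
bump function `ψ` supported in `(-l, τ)`, the field
`w = (k₁ψ'(y₃) cos(k·y_h), k₂ψ'(y₃) cos(k·y_h), |k|²ψ(y₃) sin(k·y_h))`
is smooth, periodic and divergence free, and vanishes for `y₃` outside the support of `ψ`. Its
trace `u = |k|²ψ(0) sin(k·y_h)` has `|∇_h u|² = |k|²(|k|²ψ(0))² cos²(k·y_h)`, and `sin²` and `cos²`
have the same mean over the period cell (`cos(2k·y_h)` has mean zero), so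
`∫_Q u² = |k|⁻² ∫_Q |∇_h u|²`. The constant `max{L₁², L₂²}` is `|k|⁻²` for the lowest mode
`k = (1/L₁, 0)` or `k = (0, 1/L₂)` along the longer period; for `k = (1/L₁, 0)` the field is
`1/L₁` times the paper's.
-/

theorem setIntegral_finTwo_mul (f g : ℝ → ℝ) (s t : Set ℝ) :
    ∫ z in {z : Fin 2 → ℝ | z 0 ∈ s ∧ z 1 ∈ t}, f (z 0) * g (z 1)
      = (∫ x in s, f x) * ∫ x in t, g x := by
  rw [← setIntegral_prod_mul (μ := volume) (ν := volume), ← Measure.volume_eq_prod]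
  exact (volume_preserving_finTwoArrow ℝ).setIntegral_preimage_emb
    MeasurableEquiv.finTwoArrow.measurableEmbedding (fun p => f p.1 * g p.2) (s ×ˢ t)

theorem setIntegral_cos_mul_eq_zero {m L : ℝ} {n : ℤ} (hL : 0 ≤ L) (hm : m ≠ 0)
    (h : m * L = n) : ∫ x in Ioo 0 (2 * π * L), cos (m * x) = 0 := by
  have hmL : m * (2 * π * L) = (2 * n : ℤ) * π := by push_cast; rw [← h]; ring
  rw [← integral_Ioc_eq_integral_Ioo, ← intervalIntegral.integral_of_le (by positivity),
    intervalIntegral.integral_comp_mul_left _ hm, integral_cos, mul_zero, hmL, sin_int_mul_pi,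
    sin_zero, sub_zero, smul_zero]

theorem setIntegral_sin_mul_eq_zero {m L : ℝ} {n : ℤ} (hL : 0 ≤ L) (hm : m ≠ 0)
    (h : m * L = n) : ∫ x in Ioo 0 (2 * π * L), sin (m * x) = 0 := by
  have hmL : m * (2 * π * L) = n * (2 * π) := by rw [← h]; ring
  rw [← integral_Ioc_eq_integral_Ioo, ← intervalIntegral.integral_of_le (by positivity),
    intervalIntegral.integral_comp_mul_left _ hm, integral_sin, mul_zero, hmL, cos_int_mul_two_pi,
    cos_zero, sub_self, smul_zero]

theorem sq_add_sq_pos_of_ne_zero {k : Fin 2 → ℝ} (hk : k ≠ 0) : 0 < k 0 ^ 2 + k 1 ^ 2 := by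
  obtain h | h : k 0 ≠ 0 ∨ k 1 ≠ 0 := by simpa [Function.ne_iff, Fin.exists_fin_two] using hk
  all_goals positivity

theorem fderiv_apply_mul_comp_apply {ι : Type*} [Fintype ι] {g h : ℝ → ℝ} {g' h' : ℝ} {j : ι}
    {φ : (ι → ℝ) →L[ℝ] ℝ} {y : ι → ℝ} (hg : HasDerivAt g g' (y j)) (hh : HasDerivAt h h' (φ y))
    (v : ι → ℝ) :
    fderiv ℝ (fun z => g (z j) * h (φ z)) y v = g (y j) * h' * φ v + h (φ y) * g' * v j := by
  have hd : HasFDerivAt (fun z : ι → ℝ => g (z j) * h (φ z)) _ y :=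
    (hg.comp_hasFDerivAt y (hasFDerivAt_apply j y)).fun_mul (hh.comp_hasFDerivAt y φ.hasFDerivAt)
  rw [hd.fderiv]
  simp [mul_assoc]

def periodCell (L₁ L₂ : ℝ) : Set (Fin 2 → ℝ) :=
  {z | z 0 ∈ Ioo 0 (2 * π * L₁) ∧ z 1 ∈ Ioo 0 (2 * π * L₂)}

theorem integrableOn_periodCell {f : (Fin 2 → ℝ) → ℝ} (hf : Continuous f) (L₁ L₂ : ℝ) :
    IntegrableOn f (periodCell L₁ L₂) := by
  refine (hf.continuousOn.integrableOn_compact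
    (isCompact_Icc (a := 0) (b := ![2 * π * L₁, 2 * π * L₂]))).mono_set ?_
  rintro z ⟨h0, h1⟩
  constructor <;> intro i <;> fin_cases i <;> simp [h0.1.le, h0.2.le, h1.1.le, h1.2.le]

noncomputable def planeWave (c : ℝ) (k z : Fin 2 → ℝ) : ℝ :=
  c * sin (k 0 * z 0 + k 1 * z 1)

section PlaneWave

variable {L₁ L₂ c : ℝ} {k : Fin 2 → ℝ} {n₀ n₁ : ℤ}

theorem setIntegral_periodCell_cos_two_mul_eq_zero (hL₁ : 0 ≤ L₁) (hL₂ : 0 ≤ L₂) (hk : k ≠ 0)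
    (h₀ : k 0 * L₁ = n₀) (h₁ : k 1 * L₂ = n₁) :
    ∫ z in periodCell L₁ L₂, cos (2 * (k 0 * z 0 + k 1 * z 1)) = 0 := by
  have h₀' : 2 * k 0 * L₁ = (2 * n₀ : ℤ) := by push_cast; rw [← h₀]; ring
  have h₁' : 2 * k 1 * L₂ = (2 * n₁ : ℤ) := by push_cast; rw [← h₁]; ring
  simp_rw [mul_add, ← mul_assoc, cos_add]
  rw [integral_sub (integrableOn_periodCell (by fun_prop) _ _)
      (integrableOn_periodCell (by fun_prop) _ _), periodCell,
    setIntegral_finTwo_mul (fun x => cos (2 * k 0 * x)) (fun x => cos (2 * k 1 * x)),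
    setIntegral_finTwo_mul (fun x => sin (2 * k 0 * x)) (fun x => sin (2 * k 1 * x))]
  obtain hk₀ | hk₁ : k 0 ≠ 0 ∨ k 1 ≠ 0 := by
    simpa [Function.ne_iff, Fin.exists_fin_two] using hk
  · simp [setIntegral_cos_mul_eq_zero hL₁ (by simpa using hk₀) h₀',
      setIntegral_sin_mul_eq_zero hL₁ (by simpa using hk₀) h₀']
  · simp [setIntegral_cos_mul_eq_zero hL₂ (by simpa using hk₁) h₁',
      setIntegral_sin_mul_eq_zero hL₂ (by simpa using hk₁) h₁']

theorem setIntegral_periodCell_sin_sq_eq_cos_sq (hL₁ : 0 ≤ L₁) (hL₂ : 0 ≤ L₂) (hk : k ≠ 0)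
    (h₀ : k 0 * L₁ = n₀) (h₁ : k 1 * L₂ = n₁) :
    ∫ z in periodCell L₁ L₂, sin (k 0 * z 0 + k 1 * z 1) ^ 2
      = ∫ z in periodCell L₁ L₂, cos (k 0 * z 0 + k 1 * z 1) ^ 2 := by
  rw [eq_comm, ← sub_eq_zero, ← integral_sub (integrableOn_periodCell (by fun_prop) _ _)
      (integrableOn_periodCell (by fun_prop) _ _)]
  simp_rw [← cos_two_mul']
  exact setIntegral_periodCell_cos_two_mul_eq_zero hL₁ hL₂ hk h₀ h₁

theorem fderiv_planeWave_apply_single (z : Fin 2 → ℝ) (i : Fin 2) :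
    fderiv ℝ (planeWave c k) z (Pi.single i 1) = c * cos (k 0 * z 0 + k 1 * z 1) * k i := by
  have hd : HasFDerivAt (planeWave c k) _ z :=
    ((((hasFDerivAt_apply 0 z).const_mul (k 0)).add
      ((hasFDerivAt_apply 1 z).const_mul (k 1))).sin).const_mul c
  rw [hd.fderiv]
  fin_cases i <;> simp [mul_assoc]

theorem setIntegral_periodCell_planeWave_sq (hL₁ : 0 ≤ L₁) (hL₂ : 0 ≤ L₂) (hk : k ≠ 0)
    (h₀ : k 0 * L₁ = n₀) (h₁ : k 1 * L₂ = n₁) :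
    ∫ z in periodCell L₁ L₂, planeWave c k z ^ 2
      = (k 0 ^ 2 + k 1 ^ 2)⁻¹ * ∫ z in periodCell L₁ L₂,
          (fderiv ℝ (planeWave c k) z (Pi.single 0 1) ^ 2
            + fderiv ℝ (planeWave c k) z (Pi.single 1 1) ^ 2) := by
  have hgrad (z : Fin 2 → ℝ) :
      fderiv ℝ (planeWave c k) z (Pi.single 0 1) ^ 2
        + fderiv ℝ (planeWave c k) z (Pi.single 1 1) ^ 2
        = (k 0 ^ 2 + k 1 ^ 2) * (c ^ 2 * cos (k 0 * z 0 + k 1 * z 1) ^ 2) := by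
    simp only [fderiv_planeWave_apply_single]
    ring
  simp only [hgrad, planeWave, mul_pow]
  rw [integral_const_mul, integral_const_mul, integral_const_mul,
    inv_mul_cancel_left₀ (sq_add_sq_pos_of_ne_zero hk).ne',
    setIntegral_periodCell_sin_sq_eq_cos_sq hL₁ hL₂ hk h₀ h₁]

theorem exists_planeWave_ne_zero (hc : c ≠ 0) (hk : k ≠ 0) : ∃ z, planeWave c k z ≠ 0 := by
  have hk2 := (sq_add_sq_pos_of_ne_zero hk).ne'
  refine ⟨(π / 2 / (k 0 ^ 2 + k 1 ^ 2)) • k, ?_⟩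
  have hphase : k 0 * ((π / 2 / (k 0 ^ 2 + k 1 ^ 2)) • k) 0
      + k 1 * ((π / 2 / (k 0 ^ 2 + k 1 ^ 2)) • k) 1 = π / 2 := by
    simp only [Pi.smul_apply, smul_eq_mul]
    field_simp
  rwa [planeWave, hphase, sin_pi_div_two, mul_one]

end PlaneWave

def horizontalPhase (k : Fin 2 → ℝ) : (Fin 3 → ℝ) →L[ℝ] ℝ :=
  k 0 • ContinuousLinearMap.proj 0 + k 1 • ContinuousLinearMap.proj 1

@[simp]
theorem horizontalPhase_apply (k : Fin 2 → ℝ) (y : Fin 3 → ℝ) :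
    horizontalPhase k y = k 0 * y 0 + k 1 * y 1 := rfl

theorem horizontalPhase_single (k : Fin 2 → ℝ) (i : Fin 2) (a : ℝ) :
    horizontalPhase k (Pi.single i.castSucc a) = k i * a := by
  fin_cases i <;> simp

noncomputable def shearWave (ψ : ℝ → ℝ) (k : Fin 2 → ℝ) (y : Fin 3 → ℝ) : Fin 3 → ℝ :=
  ![k 0 * deriv ψ (y 2) * cos (horizontalPhase k y),
    k 1 * deriv ψ (y 2) * cos (horizontalPhase k y),
    (k 0 ^ 2 + k 1 ^ 2) * ψ (y 2) * sin (horizontalPhase k y)]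

section ShearWave

variable {ψ : ℝ → ℝ} {k : Fin 2 → ℝ}

theorem contDiff_shearWave {n : ℕ∞} (hψ : ContDiff ℝ (n + 1) ψ) :
    ContDiff ℝ n (shearWave ψ k) := by
  have hψ' := hψ.deriv'
  have hψ := hψ.of_le le_self_add
  have hφ := (horizontalPhase k).contDiff (n := n)
  refine contDiff_pi.mpr fun i => ?_
  fin_cases i
  · exact (contDiff_const.mul (hψ'.comp (contDiff_apply ℝ ℝ 2))).mul (contDiff_cos.comp hφ)
  · exact (contDiff_const.mul (hψ'.comp (contDiff_apply ℝ ℝ 2))).mul (contDiff_cos.comp hφ)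
  · exact (contDiff_const.mul (hψ.comp (contDiff_apply ℝ ℝ 2))).mul (contDiff_sin.comp hφ)

theorem sum_fderiv_shearWave_apply_single (hψ : ContDiff ℝ 2 ψ) (y : Fin 3 → ℝ) :
    ∑ i : Fin 3, fderiv ℝ (fun z => shearWave ψ k z i) y (Pi.single i 1) = 0 := by
  have hψ' (c : ℝ) : HasDerivAt (fun t => c * deriv ψ t) (c * deriv (deriv ψ) (y 2)) (y 2) :=
    (hψ.differentiable_deriv_two _).hasDerivAt.const_mul c
  have e0 := fderiv_apply_mul_comp_apply (j := 2) (hψ' (k 0))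
    (hasDerivAt_cos (horizontalPhase k y)) (Pi.single 0 1)
  have e1 := fderiv_apply_mul_comp_apply (j := 2) (hψ' (k 1))
    (hasDerivAt_cos (horizontalPhase k y)) (Pi.single 1 1)
  have e2 := fderiv_apply_mul_comp_apply (j := 2)
    ((hψ.differentiable two_ne_zero (y 2)).hasDerivAt.const_mul (k 0 ^ 2 + k 1 ^ 2))
    (hasDerivAt_sin (horizontalPhase k y)) (Pi.single 2 1)
  rw [Fin.sum_univ_three]
  simp only [shearWave, Matrix.cons_val_zero, Matrix.cons_val_one, Matrix.cons_val_two,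
    Matrix.head_cons, Matrix.tail_cons]
  rw [e0, e1, e2]
  simp only [horizontalPhase_apply, Pi.single_eq_same, ne_eq, Fin.reduceEq, not_false_eq_true,
    Pi.single_eq_of_ne]
  ring

theorem shearWave_add_single (i : Fin 2) {L : ℝ} {n : ℤ} (h : k i * L = n) (y : Fin 3 → ℝ) :
    shearWave ψ k (y + Pi.single i.castSucc (2 * π * L)) = shearWave ψ k y := by
  have hφ : horizontalPhase k (y + Pi.single i.castSucc (2 * π * L))
      = horizontalPhase k y + n * (2 * π) := by
    rw [map_add, horizontalPhase_single, ← h]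
    ring
  have h2 : (y + Pi.single i.castSucc (2 * π * L) : Fin 3 → ℝ) 2 = y 2 := by
    fin_cases i <;> simp
  simp only [shearWave, hφ, h2, cos_add_int_mul_two_pi, sin_add_int_mul_two_pi]

theorem shearWave_eq_zero_of_notMem_tsupport {y : Fin 3 → ℝ} (hy : y 2 ∉ tsupport ψ) :
    shearWave ψ k y = 0 := by
  have hψ : ψ (y 2) = 0 := image_eq_zero_of_notMem_tsupport hy
  have hψ' : deriv ψ (y 2) = 0 :=
    image_eq_zero_of_notMem_tsupport fun h => hy (tsupport_deriv_subset h)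
  ext i
  fin_cases i <;> simp [shearWave, hψ, hψ']

theorem shearWave_trace (z : Fin 2 → ℝ) :
    shearWave ψ k ![z 0, z 1, 0] 2 = planeWave ((k 0 ^ 2 + k 1 ^ 2) * ψ 0) k z := by
  simp [shearWave, planeWave, mul_assoc]

end ShearWave

theorem exists_inv_sq_add_sq_eq_max {L₁ L₂ : ℝ} (hL₁ : 0 < L₁) (hL₂ : 0 < L₂) :
    ∃ k : Fin 2 → ℝ, (∃ n : ℤ, k 0 * L₁ = n) ∧ (∃ n : ℤ, k 1 * L₂ = n) ∧
      (k 0 ^ 2 + k 1 ^ 2)⁻¹ = max (L₁ ^ 2) (L₂ ^ 2) := by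
  rcases le_total L₂ L₁ with h | h
  · refine ⟨![L₁⁻¹, 0], ⟨1, by simp [hL₁.ne']⟩, ⟨0, by simp⟩, ?_⟩
    simp [max_eq_left (pow_le_pow_left₀ hL₂.le h 2)]
  · refine ⟨![0, L₂⁻¹], ⟨0, by simp⟩, ⟨1, by simp [hL₂.ne']⟩, ?_⟩
    simp [max_eq_right (pow_le_pow_left₀ hL₁.le h 2)]

/-- Attainment half of the sharp constant `max{L₁², L₂²}`: there exists a smooth,
horizontally periodic, divergence-free vector field `w` on `ℝ³`, vanishing for `y₃`
outside a compact subset of `(-l, τ)`, whose interface trace `w₃(·, 0)` is nontrivial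
and realizes equality `∫_Q w₃(y_h,0)² = max{L₁², L₂²} ∫_Q |∇_h w₃(y_h,0)|²`. -/
theorem stmt_1 (L₁ L₂ l τ : ℝ) (hL₁ : 0 < L₁) (hL₂ : 0 < L₂) (hl : 0 < l) (hτ : 0 < τ) :
    ∃ w : (Fin 3 → ℝ) → (Fin 3 → ℝ),
      ContDiff ℝ (⊤ : ℕ∞) w ∧
      (∀ y, w (y + Pi.single 0 (2 * π * L₁)) = w y) ∧
      (∀ y, w (y + Pi.single 1 (2 * π * L₂)) = w y) ∧
      (∀ y, (∑ i : Fin 3, fderiv ℝ (fun z => w z i) y (Pi.single i 1)) = 0) ∧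
      (∃ K : Set ℝ, IsCompact K ∧ K ⊆ Set.Ioo (-l) τ ∧
        ∀ y : Fin 3 → ℝ, y 2 ∉ K → w y = 0) ∧
      (∃ yh : Fin 2 → ℝ, w ![yh 0, yh 1, 0] 2 ≠ 0) ∧
      (∫ yh in {yh : Fin 2 → ℝ | yh 0 ∈ Set.Ioo 0 (2 * π * L₁) ∧
            yh 1 ∈ Set.Ioo 0 (2 * π * L₂)},
          (w ![yh 0, yh 1, 0] 2) ^ 2)
        = max (L₁ ^ 2) (L₂ ^ 2) *
          ∫ yh in {yh : Fin 2 → ℝ | yh 0 ∈ Set.Ioo 0 (2 * π * L₁) ∧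
              yh 1 ∈ Set.Ioo 0 (2 * π * L₂)},
            ((fderiv ℝ (fun z : Fin 2 → ℝ => w ![z 0, z 1, 0] 2) yh (Pi.single 0 1)) ^ 2 +
             (fderiv ℝ (fun z : Fin 2 → ℝ => w ![z 0, z 1, 0] 2) yh (Pi.single 1 1)) ^ 2) := by
  obtain ⟨k, ⟨n₀, h₀⟩, ⟨n₁, h₁⟩, hmax⟩ := exists_inv_sq_add_sq_eq_max hL₁ hL₂
  have hk : k ≠ 0 := by
    rintro rfl
    have hpos : (0 : ℝ) < max (L₁ ^ 2) (L₂ ^ 2) := by positivity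
    simp [← hmax] at hpos
  let ψ : ContDiffBump (0 : ℝ) :=
    ⟨min l τ / 4, min l τ / 2, by positivity, by linarith [lt_min hl hτ]⟩
  have hψ0 : (k 0 ^ 2 + k 1 ^ 2) * ψ 0 ≠ 0 := by
    rw [ψ.one_of_mem_closedBall (Metric.mem_closedBall_self ψ.rIn_pos.le), mul_one]
    exact (sq_add_sq_pos_of_ne_zero hk).ne'
  refine ⟨shearWave ψ k, contDiff_shearWave ψ.contDiff, shearWave_add_single 0 h₀,
    shearWave_add_single 1 h₁, sum_fderiv_shearWave_apply_single ψ.contDiff,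
    ⟨tsupport ψ, ψ.hasCompactSupport, ?_, fun y hy => shearWave_eq_zero_of_notMem_tsupport hy⟩,
    ?_, ?_⟩
  · have hrOut : ψ.rOut = min l τ / 2 := rfl
    rw [ψ.tsupport_eq, closedBall_eq_Icc]
    exact Icc_subset_Ioo (by linarith [min_le_left l τ]) (by linarith [min_le_right l τ])
  · simpa only [shearWave_trace] using exists_planeWave_ne_zero hψ0 hk
  · simp only [shearWave_trace, ← hmax]
    exact setIntegral_periodCell_planeWave_sq hL₁.le hL₂.le hk h₀ h₁
end

section
/- Let L₁, L₂, l, τ > 0 and let M̄ = (M̄₁, M̄₂, 0) ∈ ℝ³ satisfy M̄₁ ≠ 0 and suppose the ratio (L₁ M̄₂)/(M̄₁ L₂) is a rational number. Then there exists a smooth vector field w : ℝ³ → ℝ³ that is horizontally periodic (with periods 2πL₁ and 2πL₂ in y₁ and y₂), divergence-free on ℝ³, vanishes whenever y₃ lies outside some compact subset of (−l, τ), whose trace y_h ↦ w₃(y_h, 0) is not identically zero, and which satisfies M̄₁ ∂₁w + M̄₂ ∂₂w ≡ 0 on ℝ³. -/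
open Real
open scoped ContDiff

/-!
The field is a plane wave in the horizontal variables, `w = (0, -ψ'(y₃) sin θ, b ψ(y₃) cos θ)`
with phase `θ = a y₁ + b y₂` and a smooth bump profile `ψ` in `y₃`. It is divergence-free because the
two nonzero partials `∂₂w₂ = -b ψ' cos θ` and `∂₃w₃ = b ψ' cos θ` cancel, and it is constant along
every horizontal direction on which the phase vanishes. Rationality of the ratio is exactly what
allows choosing `a = m / L₁`, `b = -n / L₂` with `m / n` the ratio, so that the phase is
annihilated by `M̄` while its increments over the periods `2πL₁`, `2πL₂` are multiples of `2π`.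
-/

noncomputable section

namespace PlaneWave

def phase (a b : ℝ) : (Fin 3 → ℝ) →L[ℝ] ℝ :=
  a • ContinuousLinearMap.proj 0 + b • ContinuousLinearMap.proj 1

lemma phase_apply (a b : ℝ) (y : Fin 3 → ℝ) : phase a b y = a * y 0 + b * y 1 := rfl

def height : (Fin 3 → ℝ) →L[ℝ] ℝ := ContinuousLinearMap.proj 2

lemma height_apply (y : Fin 3 → ℝ) : height y = y 2 := rfl

def field (ψ : ℝ → ℝ) (a b : ℝ) (y : Fin 3 → ℝ) : Fin 3 → ℝ :=
  ![0, -deriv ψ (y 2) * sin (phase a b y), b * (ψ (y 2) * cos (phase a b y))]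

variable {ψ : ℝ → ℝ} {a b : ℝ}

lemma contDiff_field (hψ : ContDiff ℝ ∞ ψ) : ContDiff ℝ ∞ (field ψ a b) := by
  have hψ' : ContDiff ℝ ∞ (deriv ψ) := (contDiff_infty_iff_deriv.mp hψ).2
  refine contDiff_pi.2 fun i => ?_
  fin_cases i
  · exact contDiff_const
  · exact ((hψ'.comp height.contDiff).neg).mul (contDiff_sin.comp (phase a b).contDiff)
  · exact contDiff_const.mul ((hψ.comp height.contDiff).mul (contDiff_cos.comp (phase a b).contDiff))

lemma field_add_of_phase_eq_int_mul_two_pi {v : Fin 3 → ℝ} (hv : v 2 = 0) {k : ℤ}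
    (hk : phase a b v = k * (2 * π)) (y : Fin 3 → ℝ) :
    field ψ a b (y + v) = field ψ a b y := by
  simp only [field, map_add, hk, Pi.add_apply, hv, add_zero, sin_add_int_mul_two_pi,
    cos_add_int_mul_two_pi]

lemma field_eq_zero_of_notMem_tsupport {y : Fin 3 → ℝ} (hy : y 2 ∉ tsupport ψ) :
    field ψ a b y = 0 := by
  have hψ : ψ (y 2) = 0 := image_eq_zero_of_notMem_tsupport hy
  have hψ' : deriv ψ (y 2) = 0 :=
    image_eq_zero_of_notMem_tsupport fun h => hy (tsupport_deriv_subset h)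
  ext i
  fin_cases i <;> simp [field, hψ, hψ']

lemma field_origin_two : field ψ a b ![0, 0, 0] 2 = b * ψ 0 := by
  simp [field, phase_apply]

variable (hψ : ContDiff ℝ ∞ ψ) (y : Fin 3 → ℝ)
include hψ

lemma hasFDerivAt_field_one :
    HasFDerivAt (fun z => field ψ a b z 1)
      ((-(deriv ψ (y 2) * cos (phase a b y))) • phase a b
        - (deriv (deriv ψ) (y 2) * sin (phase a b y)) • height) y := by
  have hψ' : Differentiable ℝ (deriv ψ) :=
    (contDiff_infty_iff_deriv.mp hψ).2.differentiable (by simp)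
  have hd := ((hψ' (y 2)).hasDerivAt.comp_hasFDerivAt y height.hasFDerivAt).neg.mul
    ((hasDerivAt_sin (phase a b y)).comp_hasFDerivAt y (phase a b).hasFDerivAt)
  refine hd.congr_fderiv ?_
  ext v
  simp [height_apply]
  ring

lemma hasFDerivAt_field_two :
    HasFDerivAt (fun z => field ψ a b z 2)
      ((-(b * ψ (y 2) * sin (phase a b y))) • phase a b
        + (b * deriv ψ (y 2) * cos (phase a b y)) • height) y := by
  have hd := (((hψ.differentiable (by simp) (y 2)).hasDerivAt.comp_hasFDerivAt y
    height.hasFDerivAt).mul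
    ((hasDerivAt_cos (phase a b y)).comp_hasFDerivAt y (phase a b).hasFDerivAt)).const_mul b
  refine hd.congr_fderiv ?_
  ext v
  simp [height_apply]
  ring

lemma divergence_field :
    ∑ i : Fin 3, fderiv ℝ (fun z => field ψ a b z i) y (Pi.single i 1) = 0 := by
  have h0 : (fun z => field ψ a b z 0) = fun _ => 0 := rfl
  rw [Fin.sum_univ_three, h0, (hasFDerivAt_field_one hψ y).fderiv,
    (hasFDerivAt_field_two hψ y).fderiv]
  simp [phase_apply, height_apply]
  ring

lemma fderiv_field_eq_zero {v : Fin 3 → ℝ} (hv : v 2 = 0) (hphase : phase a b v = 0)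
    (j : Fin 3) : fderiv ℝ (fun z => field ψ a b z j) y v = 0 := by
  fin_cases j
  · show fderiv ℝ (fun _ => (0 : ℝ)) y v = 0
    simp
  · simp [(hasFDerivAt_field_one hψ y).fderiv, height_apply, hv, hphase]
  · simp [(hasFDerivAt_field_two hψ y).fderiv, height_apply, hv, hphase]

end PlaneWave

open PlaneWave in
theorem stmt_4_general (L₁ L₂ l τ : ℝ) (hL₁ : 0 < L₁) (hL₂ : 0 < L₂) (hl : 0 < l) (hτ : 0 < τ)
    (M : Fin 3 → ℝ) (hM1 : M 0 ≠ 0)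
    (hrat : ∃ q : ℚ, (L₁ * M 1) / (M 0 * L₂) = (q : ℝ)) :
    ∃ w : (Fin 3 → ℝ) → (Fin 3 → ℝ),
      ContDiff ℝ (⊤ : ℕ∞) w ∧
      (∀ y, w (y + Pi.single 0 (2 * π * L₁)) = w y) ∧
      (∀ y, w (y + Pi.single 1 (2 * π * L₂)) = w y) ∧
      (∀ y, (∑ i : Fin 3, fderiv ℝ (fun z => w z i) y (Pi.single i 1)) = 0) ∧
      (∃ K : Set ℝ, IsCompact K ∧ K ⊆ Set.Ioo (-l) τ ∧
        ∀ y : Fin 3 → ℝ, y 2 ∉ K → w y = 0) ∧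
      (∃ yh : Fin 2 → ℝ, w ![yh 0, yh 1, 0] 2 ≠ 0) ∧
      (∀ (y : Fin 3 → ℝ) (j : Fin 3),
        M 0 * fderiv ℝ (fun z => w z j) y (Pi.single 0 1) +
          M 1 * fderiv ℝ (fun z => w z j) y (Pi.single 1 1) = 0) := by
  obtain ⟨q, hq⟩ := hrat
  obtain ⟨ψ, hψK, hψc, hψ, -, hψ0⟩ :=
    exists_contDiff_tsupport_subset (n := ⊤) (Ioo_mem_nhds (neg_neg_iff_pos.2 hl) hτ)
  have hden : (q.den : ℝ) ≠ 0 := Nat.cast_ne_zero.2 q.den_nz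
  have hMphase : phase (q.num / L₁) (-(q.den / L₂)) (M 0 • Pi.single 0 1 + M 1 • Pi.single 1 1)
      = 0 := by
    rw [← Rat.num_div_den q, Rat.cast_div, Rat.cast_intCast, Rat.cast_natCast] at hq
    field_simp at hq
    simp [phase_apply]
    field_simp
    linear_combination -hq
  refine ⟨field ψ (q.num / L₁) (-(q.den / L₂)), contDiff_field hψ, ?_, ?_, divergence_field hψ,
    ⟨_, hψc.isCompact, hψK, fun y => field_eq_zero_of_notMem_tsupport⟩, ⟨0, ?_⟩, ?_⟩
  · exact field_add_of_phase_eq_int_mul_two_pi (k := q.num) (by simp) (by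
      simp [phase_apply]; field_simp)
  · exact field_add_of_phase_eq_int_mul_two_pi (k := -q.den) (by simp) (by
      simp [phase_apply]; field_simp)
  · simp [field_origin_two, hψ0, hL₂.ne', hden]
  · intro y j
    simpa using fderiv_field_eq_zero hψ y (by simp) hMphase j

/-- Rational-ratio case: if `M̄ = (M̄₁, M̄₂, 0)` with `M̄₁ ≠ 0` and `(L₁M̄₂)/(M̄₁L₂)` rational,
there exists a smooth, horizontally periodic, divergence-free vector field `w`, vanishing
for `y₃` outside a compact subset of `(-l, τ)`, with nontrivial interface trace, that is
exactly annihilated by the directional derivative `M̄₁∂₁ + M̄₂∂₂`. -/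
theorem stmt_4 (L₁ L₂ l τ : ℝ) (hL₁ : 0 < L₁) (hL₂ : 0 < L₂) (hl : 0 < l) (hτ : 0 < τ)
    (M : Fin 3 → ℝ) (hM1 : M 0 ≠ 0) (hM3 : M 2 = 0)
    (hrat : ∃ q : ℚ, (L₁ * M 1) / (M 0 * L₂) = (q : ℝ)) :
    ∃ w : (Fin 3 → ℝ) → (Fin 3 → ℝ),
      ContDiff ℝ (⊤ : ℕ∞) w ∧
      (∀ y, w (y + Pi.single 0 (2 * π * L₁)) = w y) ∧
      (∀ y, w (y + Pi.single 1 (2 * π * L₂)) = w y) ∧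
      (∀ y, (∑ i : Fin 3, fderiv ℝ (fun z => w z i) y (Pi.single i 1)) = 0) ∧
      (∃ K : Set ℝ, IsCompact K ∧ K ⊆ Set.Ioo (-l) τ ∧
        ∀ y : Fin 3 → ℝ, y 2 ∉ K → w y = 0) ∧
      (∃ yh : Fin 2 → ℝ, w ![yh 0, yh 1, 0] 2 ≠ 0) ∧
      (∀ (y : Fin 3 → ℝ) (j : Fin 3),
        M 0 * fderiv ℝ (fun z => w z j) y (Pi.single 0 1) +
          M 1 * fderiv ℝ (fun z => w z j) y (Pi.single 1 1) = 0) :=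
  stmt_4_general L₁ L₂ l τ hL₁ hL₂ hl hτ M hM1 hrat
end
end

section
/- Let L₁, L₂ > 0 and let f : ℝ² → ℝ² satisfy the equivariance conditions f(y + 2πL₁e₁) = f(y) + 2πL₁e₁ and f(y + 2πL₂e₂) = f(y) + 2πL₂e₂ for all y ∈ ℝ², together with the displacement bounds |f₁(y) − y₁| ≤ πL₁/2 and |f₂(y) − y₂| ≤ πL₂/2 for all y ∈ ℝ². If f is injective on the enlarged cell (−3πL₁, 3πL₁) × (−3πL₂, 3πL₂), then f is injective on all of ℝ². -/
/-!
The equations `f (y + v) = f y + v` say that `v` is a period of the displacement `f - id`, so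
periods form a group and `f x = f y` implies `f (x + v) = f (y + v)` for every lattice vector `v`.
The displacement bound forces `|yᵢ - xᵢ| ≤ πLᵢ` whenever `f x = f y`; shifting `x` by a lattice
vector into `[-πL₁, πL₁] × [-πL₂, πL₂]` therefore puts both shifted points in the enlarged cell,
where `f` is injective.
-/

open Real Function Set

theorem periodic_sub_id_iff {G : Type*} [AddCommGroup G] {f : G → G} {v : G} :
    Periodic (fun y => f y - y) v ↔ ∀ y, f (y + v) = f y + v := by
  refine forall_congr' fun y => ?_
  rw [sub_eq_iff_eq_add, show f y - y + (y + v) = f y + v by abel]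

theorem injective_of_injOn_of_exists_period {G : Type*} [AddCommGroup G] {f : G → G} {S : Set G}
    (hS : S.InjOn f)
    (h : ∀ x y, f x = f y → ∃ v, Periodic (fun y => f y - y) v ∧ x + v ∈ S ∧ y + v ∈ S) :
    Injective f := by
  intro x y hxy
  obtain ⟨v, hv, hx, hy⟩ := h x y hxy
  rw [periodic_sub_id_iff] at hv
  exact add_right_cancel (hS hx hy (by rw [hv, hv, hxy]))

theorem exists_int_abs_add_mul_le {p s t : ℝ} (hp : 0 < p) (hst : |s - t| ≤ p / 2) :
    ∃ m : ℤ, |t + m * p| ≤ p / 2 ∧ |s + m * p| ≤ p := by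
  obtain ⟨m, ⟨hlo, hhi⟩, -⟩ := existsUnique_add_zsmul_mem_Ico hp t (-(p / 2))
  rw [zsmul_eq_mul] at hlo hhi
  rw [abs_le] at hst
  refine ⟨m, abs_le.2 ⟨?_, ?_⟩, abs_le.2 ⟨?_, ?_⟩⟩ <;> linarith

theorem exists_int_shift_mem_Ioo_of_map_eq {ι : Type*} {f : (ι → ℝ) → ι → ℝ} {i : ι} {L : ℝ}
    (hL : 0 < L) (hb : ∀ y, |f y i - y i| ≤ π * L / 2) {x y : ι → ℝ} (hxy : f x = f y) :
    ∃ m : ℤ, x i + m * (2 * π * L) ∈ Ioo (-(3 * π * L)) (3 * π * L) ∧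
      y i + m * (2 * π * L) ∈ Ioo (-(3 * π * L)) (3 * π * L) := by
  have hπL : 0 < π * L := mul_pos pi_pos hL
  have hyx : |y i - x i| ≤ 2 * π * L / 2 :=
    calc |y i - x i| ≤ |y i - f y i| + |f x i - x i| := by
          rw [hxy]; exact abs_sub_le _ _ _
      _ ≤ 2 * π * L / 2 := by rw [abs_sub_comm]; linarith [hb x, hb y]
  obtain ⟨m, hx, hy⟩ := exists_int_abs_add_mul_le (by positivity) hyx
  rw [abs_le] at hx hy
  exact ⟨m, ⟨by linarith, by linarith⟩, ⟨by linarith, by linarith⟩⟩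

/-- Globalization of injectivity for the periodic interface map: if `f : ℝ² → ℝ²` is
equivariant under the horizontal periods, has componentwise displacement bounded by
`πLᵢ/2`, and is injective on the enlarged cell `(-3πL₁, 3πL₁) × (-3πL₂, 3πL₂)`,
then `f` is injective on all of `ℝ²`. -/
theorem stmt_7 (L₁ L₂ : ℝ) (hL₁ : 0 < L₁) (hL₂ : 0 < L₂)
    (f : (Fin 2 → ℝ) → (Fin 2 → ℝ))
    (heq₁ : ∀ y, f (y + Pi.single 0 (2 * π * L₁)) = f y + Pi.single 0 (2 * π * L₁))
    (heq₂ : ∀ y, f (y + Pi.single 1 (2 * π * L₂)) = f y + Pi.single 1 (2 * π * L₂))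
    (hb₁ : ∀ y, |f y 0 - y 0| ≤ π * L₁ / 2)
    (hb₂ : ∀ y, |f y 1 - y 1| ≤ π * L₂ / 2)
    (hinj : Set.InjOn f {y | y 0 ∈ Set.Ioo (-(3 * π * L₁)) (3 * π * L₁) ∧
        y 1 ∈ Set.Ioo (-(3 * π * L₂)) (3 * π * L₂)}) :
    Function.Injective f := by
  refine injective_of_injOn_of_exists_period hinj fun x y hxy => ?_
  obtain ⟨m, hxm, hym⟩ := exists_int_shift_mem_Ioo_of_map_eq hL₁ hb₁ hxy
  obtain ⟨n, hxn, hyn⟩ := exists_int_shift_mem_Ioo_of_map_eq hL₂ hb₂ hxy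
  set v : Fin 2 → ℝ := m • Pi.single 0 (2 * π * L₁) + n • Pi.single 1 (2 * π * L₂)
  have hv : ∀ z : Fin 2 → ℝ,
      (z + v) 0 = z 0 + m * (2 * π * L₁) ∧ (z + v) 1 = z 1 + n * (2 * π * L₂) := by
    simp [v]
  refine ⟨v, ((periodic_sub_id_iff.2 heq₁).zsmul m).add_period
    ((periodic_sub_id_iff.2 heq₂).zsmul n), ?_, ?_⟩
  · exact ⟨(hv x).1 ▸ hxm, (hv x).2 ▸ hxn⟩
  · exact ⟨(hv y).1 ▸ hym, (hv y).2 ▸ hyn⟩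
end

section
/- Let n ≥ 1 and let f : ℝⁿ → ℝⁿ be continuously differentiable such that at every point x ∈ ℝⁿ the derivative Df(x) is an invertible linear map, and assume the displacement is bounded: there exists C ≥ 0 with |f(x) − x| ≤ C for all x ∈ ℝⁿ. Then f is surjective: f(ℝⁿ) = ℝⁿ. -/
/-!
The range of `f` is open by the inverse function theorem. Bounded displacement makes `f`
proper (preimages of bounded sets are bounded), so in a proper space the range is also closed.
A nonempty clopen subset of the connected space `ℝⁿ` is everything.
-/

open Filter Bornology Metric Set

theorem Metric.tendsto_cobounded_of_dist_le {α : Type*} [PseudoMetricSpace α] {f : α → α} {C : ℝ}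
    (hf : ∀ x, dist (f x) x ≤ C) : Tendsto f (cobounded α) (cobounded α) := by
  rcases isEmpty_or_nonempty α with _ | ⟨⟨c⟩⟩
  · rw [filter_eq_bot_of_isEmpty (cobounded α)]
    exact tendsto_bot
  rw [← tendsto_dist_right_atTop_iff c]
  refine tendsto_atTop_mono (fun x => ?_)
    (tendsto_atTop_add_const_right _ (-C) (tendsto_dist_right_cobounded_atTop c))
  linarith [dist_triangle x (f x) c, dist_comm x (f x), hf x]

theorem Metric.isClosedMap_of_dist_le {α : Type*} [MetricSpace α] [ProperSpace α] {f : α → α}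
    {C : ℝ} (hcont : Continuous f) (hf : ∀ x, dist (f x) x ≤ C) : IsClosedMap f := by
  refine (isProperMap_iff_tendsto_cocompact.2 ⟨hcont, ?_⟩).isClosedMap
  simpa only [← cobounded_eq_cocompact] using tendsto_cobounded_of_dist_le hf

theorem IsOpenMap.surjective_of_isClosedMap {X Y : Type*} [TopologicalSpace X]
    [TopologicalSpace Y] [Nonempty X] [PreconnectedSpace Y] {f : X → Y} (ho : IsOpenMap f)
    (hc : IsClosedMap f) : Function.Surjective f :=
  range_eq_univ.1 <| IsClopen.eq_univ ⟨hc.isClosed_range, ho.isOpen_range⟩ (range_nonempty f)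

theorem stmt_8_general (n : ℕ)
    (f : EuclideanSpace ℝ (Fin n) → EuclideanSpace ℝ (Fin n))
    (hf : ContDiff ℝ 1 f)
    (hinv : ∀ x, ∃ e : EuclideanSpace ℝ (Fin n) ≃L[ℝ] EuclideanSpace ℝ (Fin n),
      (e : EuclideanSpace ℝ (Fin n) →L[ℝ] EuclideanSpace ℝ (Fin n)) = fderiv ℝ f x)
    (C : ℝ) (hdisp : ∀ x, ‖f x - x‖ ≤ C) :
    Function.Surjective f := by
  choose e he using hinv
  have hopen : IsOpenMap f := isOpenMap_of_hasStrictFDerivAt_equiv fun x =>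
    he x ▸ hf.hasStrictFDerivAt one_ne_zero
  have hclosed : IsClosedMap f :=
    isClosedMap_of_dist_le hf.continuous fun x => (dist_eq_norm _ _).trans_le (hdisp x)
  exact hopen.surjective_of_isClosedMap hclosed

/-- Surjectivity of a `C¹` map of `ℝⁿ` with everywhere invertible derivative and
bounded displacement `|f(x) - x| ≤ C`. -/
theorem stmt_8 (n : ℕ) (hn : 1 ≤ n)
    (f : EuclideanSpace ℝ (Fin n) → EuclideanSpace ℝ (Fin n))
    (hf : ContDiff ℝ 1 f)
    (hinv : ∀ x, ∃ e : EuclideanSpace ℝ (Fin n) ≃L[ℝ] EuclideanSpace ℝ (Fin n),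
      (e : EuclideanSpace ℝ (Fin n) →L[ℝ] EuclideanSpace ℝ (Fin n)) = fderiv ℝ f x)
    (C : ℝ) (hC : 0 ≤ C) (hdisp : ∀ x, ‖f x - x‖ ≤ C) :
    Function.Surjective f :=
  stmt_8_general n f hf hinv C hdisp
end

section
/- Let n ≥ 1 and let f : ℝⁿ → ℝⁿ be continuously differentiable and injective, such that at every point x ∈ ℝⁿ the derivative Df(x) is an invertible linear map, and such that there exists C ≥ 0 with |f(x) − x| ≤ C for all x ∈ ℝⁿ. Then f is a bijection of ℝⁿ onto ℝⁿ, its inverse g := f⁻¹ is continuously differentiable, and Dg(f(x)) = (Df(x))⁻¹ for all x ∈ ℝⁿ. -/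
/-!
A local diffeomorphism is an open map, and a continuous map with bounded displacement
`‖f x - x‖ ≤ C` is proper, hence closed. So the range of `f` is a nonempty clopen subset of the
connected space `ℝⁿ`, i.e. all of it. An injective `f` is then a homeomorphism, and the inverse
function theorem upgrades it to a `C¹`-diffeomorphism with `Dg(f x) = (Df x)⁻¹`.
-/

open Function Set

theorem surjective_of_isOpenMap_of_isClosedMap {X Y : Type*} [TopologicalSpace X] [Nonempty X]
    [TopologicalSpace Y] [PreconnectedSpace Y] {f : X → Y} (ho : IsOpenMap f)
    (hc : IsClosedMap f) : Surjective f :=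
  range_eq_univ.mp <| IsClopen.eq_univ ⟨hc.isClosed_range, ho.isOpen_range⟩ (range_nonempty f)

section

variable {E : Type*} [NormedAddCommGroup E]

theorem isProperMap_of_norm_sub_le [ProperSpace E] {f : E → E} (hf : Continuous f) {C : ℝ}
    (hdisp : ∀ x, ‖f x - x‖ ≤ C) : IsProperMap f := by
  refine isProperMap_iff_isCompact_preimage.mpr ⟨hf, fun K hK => ?_⟩
  obtain ⟨R, hR⟩ := hK.isBounded.exists_norm_le
  refine Metric.isCompact_of_isClosed_isBounded (hK.isClosed.preimage hf)
    (isBounded_iff_forall_norm_le.mpr ⟨R + C, fun x hx => ?_⟩)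
  calc ‖x‖ = ‖f x - (f x - x)‖ := by rw [sub_sub_cancel]
    _ ≤ ‖f x‖ + ‖f x - x‖ := norm_sub_le _ _
    _ ≤ R + C := add_le_add (hR _ hx) (hdisp x)

theorem ContDiff.isOpenMap_of_hasFDerivAt_equiv {𝕂 : Type*} [RCLike 𝕂] [NormedSpace 𝕂 E]
    [CompleteSpace E] {n : WithTop ℕ∞} {f : E → E} {f' : E → E ≃L[𝕂] E} (hf : ContDiff 𝕂 n f)
    (hn : n ≠ 0) (hf' : ∀ x, HasFDerivAt f (f' x : E →L[𝕂] E) x) : IsOpenMap f :=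
  isOpenMap_of_hasStrictFDerivAt_equiv fun x => hf.contDiffAt.hasStrictFDerivAt' (hf' x) hn

end

theorem stmt_9_general (n : ℕ)
    (f : EuclideanSpace ℝ (Fin n) → EuclideanSpace ℝ (Fin n))
    (hf : ContDiff ℝ 1 f) (hfinj : Function.Injective f)
    (hinv : ∀ x, ∃ e : EuclideanSpace ℝ (Fin n) ≃L[ℝ] EuclideanSpace ℝ (Fin n),
      (e : EuclideanSpace ℝ (Fin n) →L[ℝ] EuclideanSpace ℝ (Fin n)) = fderiv ℝ f x)
    (C : ℝ) (hdisp : ∀ x, ‖f x - x‖ ≤ C) :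
    Function.Bijective f ∧
      ∃ g : EuclideanSpace ℝ (Fin n) → EuclideanSpace ℝ (Fin n),
        (∀ x, g (f x) = x) ∧ (∀ y, f (g y) = y) ∧ ContDiff ℝ 1 g ∧
        ∀ x,
          (fderiv ℝ g (f x)).comp (fderiv ℝ f x) =
            ContinuousLinearMap.id ℝ (EuclideanSpace ℝ (Fin n)) ∧
          (fderiv ℝ f x).comp (fderiv ℝ g (f x)) =
            ContinuousLinearMap.id ℝ (EuclideanSpace ℝ (Fin n)) := by
  choose f' hf'_eq using hinv
  have hf' : ∀ x, HasFDerivAt f (f' x : _ →L[ℝ] _) x := fun x => by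
    rw [hf'_eq]; exact (hf.differentiable one_ne_zero x).hasFDerivAt
  have hopen := hf.isOpenMap_of_hasFDerivAt_equiv one_ne_zero hf'
  have hbij : Bijective f := ⟨hfinj, surjective_of_isOpenMap_of_isClosedMap hopen
    (isProperMap_of_norm_sub_le hf.continuous hdisp).isClosedMap⟩
  let e := (Equiv.ofBijective f hbij).toHomeomorphOfContinuousOpen hf.continuous hopen
  have hgf : ∀ x, e.symm (f x) = x := e.symm_apply_apply
  have hg' : ∀ x, HasFDerivAt e.symm ((f' x).symm : _ →L[ℝ] _) (f x) := fun x =>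
    .of_local_left_inverse e.symm.continuous.continuousAt
      (by rw [hgf]; exact hf' x) (.of_forall e.apply_symm_apply)
  refine ⟨hbij, e.symm, hgf, e.apply_symm_apply, e.contDiff_symm hf' hf, fun x => ?_⟩
  rw [(hg' x).fderiv, (hf' x).fderiv]
  exact ⟨(f' x).coe_symm_comp_coe, (f' x).coe_comp_coe_symm⟩

/-- Global `C¹`-diffeomorphism: an injective `C¹` map of `ℝⁿ` with everywhere invertible
derivative and bounded displacement is a bijection of `ℝⁿ`, its inverse `g` is `C¹`, and
`Dg(f(x)) = (Df(x))⁻¹` for all `x` (expressed via the two composition identities). -/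
theorem stmt_9 (n : ℕ) (hn : 1 ≤ n)
    (f : EuclideanSpace ℝ (Fin n) → EuclideanSpace ℝ (Fin n))
    (hf : ContDiff ℝ 1 f) (hfinj : Function.Injective f)
    (hinv : ∀ x, ∃ e : EuclideanSpace ℝ (Fin n) ≃L[ℝ] EuclideanSpace ℝ (Fin n),
      (e : EuclideanSpace ℝ (Fin n) →L[ℝ] EuclideanSpace ℝ (Fin n)) = fderiv ℝ f x)
    (C : ℝ) (hC : 0 ≤ C) (hdisp : ∀ x, ‖f x - x‖ ≤ C) :
    Function.Bijective f ∧
      ∃ g : EuclideanSpace ℝ (Fin n) → EuclideanSpace ℝ (Fin n),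
        (∀ x, g (f x) = x) ∧ (∀ y, f (g y) = y) ∧ ContDiff ℝ 1 g ∧
        ∀ x,
          (fderiv ℝ g (f x)).comp (fderiv ℝ f x) =
            ContinuousLinearMap.id ℝ (EuclideanSpace ℝ (Fin n)) ∧
          (fderiv ℝ f x).comp (fderiv ℝ g (f x)) =
            ContinuousLinearMap.id ℝ (EuclideanSpace ℝ (Fin n)) :=
  stmt_9_general n f hf hfinj hinv C hdisp
end

section
/- Let n ≥ 1, let S ⊆ ℝⁿ be a closed set, and let f : S → S be a continuous bijection of S onto S such that there exists C ≥ 0 with |f(x) − x| ≤ C for all x ∈ S. Then the inverse map g : S → S (characterized by g(f(x)) = x for all x ∈ S) is continuous; that is, f is a homeomorphism of S onto itself. -/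
/-!
Around a point `y = f x₀` of `f '' S`, every `x ∈ S` with `f x` within `1` of `y` lies in the
compact set `K = S ∩ closedBall y (C + 1)`, so `f '' K` is a neighbourhood of `y` in `f '' S`.
On `f '' K` the inverse is continuous, because a continuous injection of a compact space into a
Hausdorff space is a closed map.
-/

open Set Topology Metric

theorem IsClosedMap.continuousOn_image_of_leftInvOn {α β : Type*} [TopologicalSpace α]
    [TopologicalSpace β] {f : α → β} {s : Set α} (h : IsClosedMap (s.domRestrict f))
    {finv : β → α} (hleft : LeftInvOn finv f s) : ContinuousOn finv (f '' s) := by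
  refine continuousOn_iff_isClosed.2 fun t ht => ⟨f '' (t ∩ s), ?_, ?_⟩
  · rw [← image_domRestrict]
    exact h _ (ht.preimage continuous_subtype_val)
  · rw [inter_eq_self_of_subset_left (image_mono inter_subset_right), hleft.image_inter']

theorem IsCompact.continuousOn_image_of_leftInvOn {α β : Type*} [TopologicalSpace α]
    [TopologicalSpace β] [T2Space β] {f : α → β} {K : Set α} (hK : IsCompact K)
    (hf : ContinuousOn f K) {finv : β → α} (hleft : LeftInvOn finv f K) :
    ContinuousOn finv (f '' K) := by
  have : CompactSpace K := isCompact_iff_compactSpace.mp hK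
  exact hf.domRestrict.isClosedMap.continuousOn_image_of_leftInvOn hleft

theorem continuousOn_image_of_leftInvOn_of_dist_le {X : Type*} [MetricSpace X] [ProperSpace X]
    {f finv : X → X} {S : Set X} {C : ℝ} (hS : IsClosed S) (hf : ContinuousOn f S)
    (hleft : LeftInvOn finv f S) (hdisp : ∀ x ∈ S, dist (f x) x ≤ C) :
    ContinuousOn finv (f '' S) := by
  rintro _ ⟨x₀, hx₀, rfl⟩
  set K := S ∩ closedBall (f x₀) (C + 1)
  have hKS : K ⊆ S := inter_subset_left
  have hK : IsCompact K := (isCompact_closedBall _ _).inter_left hS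
  have hx₀K : x₀ ∈ K := ⟨hx₀, by
    rw [mem_closedBall, dist_comm]
    linarith [hdisp x₀ hx₀, dist_nonneg (x := f x₀) (y := x₀)]⟩
  have hnhds : f '' K ∈ 𝓝[f '' S] f x₀ := by
    refine mem_nhdsWithin.2 ⟨ball (f x₀) 1, isOpen_ball, mem_ball_self one_pos, ?_⟩
    rintro _ ⟨hy, ⟨x, hx, rfl⟩⟩
    refine ⟨x, ⟨hx, ?_⟩, rfl⟩
    calc dist x (f x₀) ≤ dist x (f x) + dist (f x) (f x₀) := dist_triangle _ _ _
      _ ≤ C + 1 := by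
        rw [dist_comm]
        linarith [hdisp x hx, mem_ball.1 hy]
  exact ((hK.continuousOn_image_of_leftInvOn (hf.mono hKS) (hleft.mono hKS)) (f x₀)
    ⟨x₀, hx₀K, rfl⟩).mono_of_mem_nhdsWithin hnhds

theorem stmt_10_general (n : ℕ)
    (S : Set (EuclideanSpace ℝ (Fin n))) (hS : IsClosed S)
    (f : EuclideanSpace ℝ (Fin n) → EuclideanSpace ℝ (Fin n))
    (hcont : ContinuousOn f S) (hinj : Set.InjOn f S)
    (hsurj : f '' S = S)
    (C : ℝ) (hdisp : ∀ x ∈ S, ‖f x - x‖ ≤ C) :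
    ∃ g : EuclideanSpace ℝ (Fin n) → EuclideanSpace ℝ (Fin n),
      Set.MapsTo g S S ∧ (∀ x ∈ S, g (f x) = x) ∧ (∀ y ∈ S, f (g y) = y) ∧
      ContinuousOn g S := by
  have hpre : ∀ y ∈ S, ∃ x ∈ S, f x = y := fun y hy => by rwa [← hsurj] at hy
  have hleft : LeftInvOn (Function.invFunOn f S) f S := hinj.leftInvOn_invFunOn
  refine ⟨Function.invFunOn f S, fun y hy => Function.invFunOn_mem (hpre y hy), hleft,
    fun y hy => Function.invFunOn_eq (hpre y hy), ?_⟩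
  simpa only [hsurj] using continuousOn_image_of_leftInvOn_of_dist_le hS hcont hleft
    fun x hx => (dist_eq_norm _ _).trans_le (hdisp x hx)

/-- Continuity of the inverse: a continuous bijection `f` of a closed set `S ⊆ ℝⁿ` onto
itself with bounded displacement `|f(x) - x| ≤ C` on `S` has a continuous inverse on `S`;
i.e. `f` is a homeomorphism of `S` onto itself. -/
theorem stmt_10 (n : ℕ) (hn : 1 ≤ n)
    (S : Set (EuclideanSpace ℝ (Fin n))) (hS : IsClosed S)
    (f : EuclideanSpace ℝ (Fin n) → EuclideanSpace ℝ (Fin n))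
    (hmaps : Set.MapsTo f S S) (hcont : ContinuousOn f S) (hinj : Set.InjOn f S)
    (hsurj : f '' S = S)
    (C : ℝ) (hC : 0 ≤ C) (hdisp : ∀ x ∈ S, ‖f x - x‖ ≤ C) :
    ∃ g : EuclideanSpace ℝ (Fin n) → EuclideanSpace ℝ (Fin n),
      Set.MapsTo g S S ∧ (∀ x ∈ S, g (f x) = x) ∧ (∀ y ∈ S, f (g y) = y) ∧
      ContinuousOn g S :=
  stmt_10_general n S hS f hcont hinj hsurj C hdisp
end

section
/- Let Λ > 0, c₁, c₂ ≥ 0, T > 0 and 0 < δ ≤ 1. Let f : [0, T] → ℝ be differentiable with f(t) ≥ 0 and f(0) ≤ c₁δ⁴, and let g : [0, T] → ℝ be continuous with g(t) ≥ 0, and assume that for every t ∈ [0, T]: f′(t) + g(t) ≤ 2Λ·( f(t) + ∫₀ᵗ g(s) ds ) + c₂·δ³·e^{3Λt}. Then for every t ∈ [0, T]: f(t) + ∫₀ᵗ g(s) ds ≤ (c₁ + c₂/Λ)·δ³·e^{3Λt}. -/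
/-!
With `F(t) = f(t) + ∫₀ᵗ g` and `M = (c₁ + c₂/Λ)δ³`, the difference `u = F - M e^{3Λt}` satisfies
`u' ≤ 2Λu`, because `ΛM ≥ c₂δ³` absorbs the source term, and `u(0) ≤ 0` since `δ⁴ ≤ δ³`.
Gronwall's inequality, via the antitone function `u(t) e^{-2Λt}`, then gives `u ≤ 0`.
-/

open MeasureTheory intervalIntegral Set Real

theorem le_mul_exp_of_hasDerivAt_le_mul {u u' : ℝ → ℝ} {K a b : ℝ}
    (hu : ContinuousOn u (Icc a b)) (hu' : ∀ t ∈ Ioo a b, HasDerivAt u (u' t) t)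
    (hle : ∀ t ∈ Ioo a b, u' t ≤ K * u t) :
    ∀ t ∈ Icc a b, u t ≤ u a * exp (K * (t - a)) := by
  have hanti : AntitoneOn (fun t => u t * exp (-K * t)) (Icc a b) := by
    refine antitoneOn_of_hasDerivWithinAt_nonpos (convex_Icc a b)
      (hu.mul (by fun_prop)) (f' := fun t => (u' t - K * u t) * exp (-K * t)) ?_ ?_
    all_goals rw [interior_Icc]; intro t ht
    · exact (((hu' t ht).mul (hasDerivAt_const_mul (-K)).exp).congr_deriv
        (by ring)).hasDerivWithinAt
    · exact mul_nonpos_of_nonpos_of_nonneg (sub_nonpos.2 (hle t ht)) (exp_pos _).le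
  intro t ht
  have h := hanti (left_mem_Icc.2 (ht.1.trans ht.2)) ht ht.1
  simp only at h
  calc u t = u t * exp (-K * t) * exp (K * t) := by rw [mul_assoc, ← exp_add]; simp
    _ ≤ u a * exp (-K * a) * exp (K * t) := by gcongr
    _ = u a * exp (K * (t - a)) := by rw [mul_assoc, ← exp_add]; ring_nf

theorem le_mul_exp_of_hasDerivAt_le_mul_add_exp {F F' : ℝ → ℝ} {κ μ β M a b : ℝ}
    (hF : ContinuousOn F (Icc a b)) (hF' : ∀ t ∈ Ioo a b, HasDerivAt F (F' t) t)
    (hle : ∀ t ∈ Ioo a b, F' t ≤ κ * F t + β * exp (μ * t))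
    (hβ : β ≤ (μ - κ) * M) (ha : F a ≤ M * exp (μ * a)) :
    ∀ t ∈ Icc a b, F t ≤ M * exp (μ * t) := by
  have hu' : ∀ t ∈ Ioo a b, HasDerivAt (fun t => F t - M * exp (μ * t))
      (F' t - M * (exp (μ * t) * μ)) t := fun t ht =>
    (hF' t ht).sub ((hasDerivAt_const_mul μ).exp.const_mul M)
  have hdec := le_mul_exp_of_hasDerivAt_le_mul (u := fun t => F t - M * exp (μ * t)) (K := κ)
    (hF.sub (by fun_prop)) hu' fun t ht => by
    linear_combination hle t ht + mul_le_mul_of_nonneg_right hβ (exp_pos (μ * t)).le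
  intro t ht
  have := (hdec t ht).trans (mul_nonpos_of_nonpos_of_nonneg (sub_nonpos.2 ha) (exp_pos _).le)
  linarith

theorem ContinuousOn.hasDerivAt_intervalIntegral {E : Type*} [NormedAddCommGroup E]
    [NormedSpace ℝ E] [CompleteSpace E] {g : ℝ → E} {a b t : ℝ}
    (hg : ContinuousOn g (Icc a b)) (ht : t ∈ Ioo a b) :
    HasDerivAt (fun x => ∫ s in a..x, g s) (g t) t :=
  integral_hasDerivAt_right
    ((hg.mono (Icc_subset_Icc_right ht.2.le)).intervalIntegrable_of_Icc ht.1.le)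
    ((hg.mono Ioo_subset_Icc_self).stronglyMeasurableAtFilter isOpen_Ioo t ht)
    (hg.continuousAt (Icc_mem_nhds ht.1 ht.2))

theorem ContinuousOn.continuousOn_intervalIntegral {E : Type*} [NormedAddCommGroup E]
    [NormedSpace ℝ E] {g : ℝ → E} {a b : ℝ} (hab : a ≤ b)
    (hg : ContinuousOn g (Icc a b)) :
    ContinuousOn (fun x => ∫ s in a..x, g s) (Icc a b) := by
  simpa [uIcc_of_le hab] using
    continuousOn_primitive_interval' (hg.intervalIntegrable_of_Icc hab) left_mem_uIcc

theorem stmt_15_general (Λ c₁ c₂ T δ : ℝ) (hΛ : 0 < Λ) (hc₁ : 0 ≤ c₁) (hc₂ : 0 ≤ c₂)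
    (hδ₀ : 0 < δ) (hδ₁ : δ ≤ 1)
    (f f' g : ℝ → ℝ)
    (hf' : ∀ t ∈ Set.Icc 0 T, HasDerivAt f (f' t) t)
    (hf0 : f 0 ≤ c₁ * δ ^ 4)
    (hg : ContinuousOn g (Set.Icc 0 T))
    (hineq : ∀ t ∈ Set.Icc 0 T,
      f' t + g t ≤ 2 * Λ * (f t + ∫ s in (0 : ℝ)..t, g s) +
        c₂ * δ ^ 3 * Real.exp (3 * Λ * t)) :
    ∀ t ∈ Set.Icc 0 T,
      f t + (∫ s in (0 : ℝ)..t, g s) ≤ (c₁ + c₂ / Λ) * δ ^ 3 * Real.exp (3 * Λ * t) := by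
  intro t ht
  have hT : 0 ≤ T := ht.1.trans ht.2
  have hcoeff : c₂ * δ ^ 3 ≤ (3 * Λ - 2 * Λ) * ((c₁ + c₂ / Λ) * δ ^ 3) := by
    have : (3 * Λ - 2 * Λ) * ((c₁ + c₂ / Λ) * δ ^ 3) = c₂ * δ ^ 3 + Λ * c₁ * δ ^ 3 := by
      field_simp
      ring
    rw [this]
    have : 0 ≤ Λ * c₁ * δ ^ 3 := by positivity
    linarith
  have hstart : f 0 ≤ (c₁ + c₂ / Λ) * δ ^ 3 := calc
    f 0 ≤ c₁ * δ ^ 4 := hf0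
    _ ≤ c₁ * δ ^ 3 :=
      mul_le_mul_of_nonneg_left (pow_le_pow_of_le_one hδ₀.le hδ₁ (by norm_num)) hc₁
    _ ≤ (c₁ + c₂ / Λ) * δ ^ 3 := by gcongr; exact le_add_of_nonneg_right (by positivity)
  have hfc : ContinuousOn f (Icc 0 T) := fun t ht => (hf' t ht).continuousAt.continuousWithinAt
  refine le_mul_exp_of_hasDerivAt_le_mul_add_exp (F := fun t => f t + ∫ s in (0 : ℝ)..t, g s)
    (κ := 2 * Λ)
    (hfc.add (hg.continuousOn_intervalIntegral hT))
    (fun t ht => (hf' t (Ioo_subset_Icc_self ht)).add (hg.hasDerivAt_intervalIntegral ht))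
    (fun t ht => hineq t (Ioo_subset_Icc_self ht)) hcoeff (by simpa using hstart) t ht

/-- Differential-inequality argument of the nonlinear error estimates: if
`f′(t) + g(t) ≤ 2Λ(f(t) + ∫₀ᵗ g) + c₂δ³e^{3Λt}` with `f ≥ 0`, `f(0) ≤ c₁δ⁴`, `g ≥ 0`
continuous, `0 < δ ≤ 1`, then `f(t) + ∫₀ᵗ g ≤ (c₁ + c₂/Λ)δ³e^{3Λt}` on `[0, T]`. -/
theorem stmt_15 (Λ c₁ c₂ T δ : ℝ) (hΛ : 0 < Λ) (hc₁ : 0 ≤ c₁) (hc₂ : 0 ≤ c₂)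
    (hT : 0 < T) (hδ₀ : 0 < δ) (hδ₁ : δ ≤ 1)
    (f f' g : ℝ → ℝ)
    (hf' : ∀ t ∈ Set.Icc 0 T, HasDerivAt f (f' t) t)
    (hfnn : ∀ t ∈ Set.Icc 0 T, 0 ≤ f t)
    (hf0 : f 0 ≤ c₁ * δ ^ 4)
    (hg : ContinuousOn g (Set.Icc 0 T))
    (hgnn : ∀ t ∈ Set.Icc 0 T, 0 ≤ g t)
    (hineq : ∀ t ∈ Set.Icc 0 T,
      f' t + g t ≤ 2 * Λ * (f t + ∫ s in (0 : ℝ)..t, g s) +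
        c₂ * δ ^ 3 * Real.exp (3 * Λ * t)) :
    ∀ t ∈ Set.Icc 0 T,
      f t + (∫ s in (0 : ℝ)..t, g s) ≤ (c₁ + c₂ / Λ) * δ ^ 3 * Real.exp (3 * Λ * t) :=
  stmt_15_general Λ c₁ c₂ T δ hΛ hc₁ hc₂ hδ₀ hδ₁ f f' g hf' hf0 hg hineq
end
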